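/- arXiv:1704.08045 — 3 statements merged into one kernel-verified Lean document; each statement's English description precedes it below -/
import Mathlib

section
/- Let σ: ℝ → ℝ be continuous, bounded, strictly monotonically increasing with limits μ = lim_{t→-∞} σ(t) and γ = lim_{t→+∞} σ(t) (so μ < γ). Fix β ∈ ℝ and real numbers c_1 < c_2 < ... < c_N. Define the N×N matrix E(α) by E(α)_{i1} = 1 and E(α)_{ij} = σ(α(c_{j−1} − c_i) + β) for j ∈ {2,...,N}. Then there exists α_0 such that E(α) is invertible for all α ≥ α_0. -/
open Filter

/-- Let `σ` be continuous, bounded and strictly increasing with limits `μ` at `-∞`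
and `γ` at `+∞`. Fix `β` and `c_1 < ⋯ < c_N`. Define the `N × N` matrix `E(α)` whose
first column is all ones and whose `(i,j)` entry (for `j ≥ 2`) is
`σ(α (c_{j-1} - c_i) + β)`. Then there is `α₀` such that `E(α)` is invertible for all
`α ≥ α₀`. -/
theorem stmt_7 (N : ℕ) (σ : ℝ → ℝ) (hcont : Continuous σ)
    (hbdd : ∃ M : ℝ, ∀ t, |σ t| ≤ M) (hmono : StrictMono σ)
    (μ γ : ℝ)
    (hμ : Tendsto σ atBot (nhds μ)) (hγ : Tendsto σ atTop (nhds γ))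
    (β : ℝ) (c : Fin N → ℝ) (hc : StrictMono c)
    (E : ℝ → Matrix (Fin N) (Fin N) ℝ)
    (hE : ∀ (α : ℝ) (i j : Fin N), E α i j =
      if h : j.val = 0 then 1
      else σ (α * (c ⟨j.val - 1, by omega⟩ - c i) + β)) :
    ∃ α₀ : ℝ, ∀ α : ℝ, α₀ ≤ α → IsUnit (E α) := by
  classical
  -- μ < σ β
  have hμs : μ < σ β := by
    have h1 : ∀ᶠ t in atBot, σ t ≤ σ (β - 1) := by
      filter_upwards [eventually_le_atBot (β - 1)] with t ht
      exact hmono.le_iff_le.mpr ht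
    have h2 : μ ≤ σ (β - 1) := le_of_tendsto hμ h1
    exact lt_of_le_of_lt h2 (hmono (by linarith))
  -- the limit matrix
  set L : Matrix (Fin N) (Fin N) ℝ := fun i j =>
    if j.val = 0 then 1
    else if i.val < j.val - 1 then γ else if i.val = j.val - 1 then σ β else μ
    with hL
  -- entrywise convergence
  have hten : Tendsto (fun α => E α) atTop (nhds L) := by
    refine tendsto_pi_nhds.mpr ?_
    intro i
    rw [tendsto_pi_nhds]
    intro j
    by_cases h : j.val = 0
    · simp only [hE, dif_pos h, hL, if_pos h]
      exact tendsto_const_nhds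
    · simp only [hE, dif_neg h, hL, if_neg h]
      set k : Fin N := ⟨j.val - 1, by omega⟩ with hk
      rcases lt_trichotomy i.val (j.val - 1) with hik | hik | hik
      · rw [if_pos hik]
        have hd : (0:ℝ) < c k - c i := by
          have : i < k := by simp [hk, Fin.lt_def]; omega
          have := hc this
          linarith
        have harg : Tendsto (fun α : ℝ => α * (c k - c i) + β) atTop atTop :=
          tendsto_atTop_add_const_right _ β (tendsto_id.atTop_mul_const hd)
        exact hγ.comp harg
      · rw [if_neg (by omega), if_pos hik]
        have hki : k = i := by
          apply Fin.ext
          simp [hk]; omega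
        simp only [hki, sub_self, mul_zero, zero_add]
        exact tendsto_const_nhds
      · rw [if_neg (by omega), if_neg (by omega)]
        have hd : c k - c i < 0 := by
          have : k < i := by simp [hk, Fin.lt_def]; omega
          have := hc this
          linarith
        have harg : Tendsto (fun α : ℝ => α * (c k - c i) + β) atTop atBot :=
          tendsto_atBot_add_const_right _ β (tendsto_id.atTop_mul_const_of_neg hd)
        exact hμ.comp harg
  -- det of limit matrix is nonzero
  have hLdet : L.det ≠ 0 := by
    intro h0
    obtain ⟨v, hv0, hv⟩ := Matrix.exists_vecMul_eq_zero_iff.mpr h0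
    apply hv0
    -- first column equation: sum of v = 0
    have hNpos : 0 < N := by
      rcases Nat.eq_zero_or_pos N with h | h
      · exfalso; apply hv0; funext x; exact absurd x.isLt (by omega)
      · exact h
    have hsum : ∑ i, v i = 0 := by
      have := congrFun hv ⟨0, hNpos⟩
      simpa [Matrix.vecMul, dotProduct, hL] using this
    have key : ∀ n : ℕ, ∀ k : Fin N, (k : ℕ) = n → v k = 0 := by
      intro n
      induction n using Nat.strong_induction_on with
      | _ n IH =>
        intro k hk
        by_cases hlast : (k : ℕ) = N - 1
        · -- use the sum equation
          have hothers : ∀ i : Fin N, i ≠ k → v i = 0 := by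
            intro i hi
            have h1 := i.isLt
            have h2 := Fin.val_ne_of_ne hi
            exact IH i (by omega) i rfl
          calc v k = ∑ i, v i := by
                rw [Finset.sum_eq_single k (fun i _ hi => hothers i hi)
                  (fun h => absurd (Finset.mem_univ k) h)]
            _ = 0 := hsum
        · -- use column k+1
          have hklt : (k : ℕ) + 1 < N := by have := k.isLt; omega
          set j : Fin N := ⟨(k : ℕ) + 1, hklt⟩ with hj
          have hcol : ∑ i, v i * L i j = 0 := by
            have := congrFun hv j
            simpa [Matrix.vecMul, dotProduct] using this
          have hcomb : ∑ i, v i * (L i j - μ) = 0 := by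
            rw [Finset.sum_congr rfl (fun i _ => by ring_nf :
              ∀ i ∈ Finset.univ, v i * (L i j - μ) = v i * L i j - μ * v i)]
            rw [Finset.sum_sub_distrib, hcol, ← Finset.mul_sum, hsum]
            ring
          have hsingle : ∑ i, v i * (L i j - μ) = v k * (σ β - μ) := by
            rw [Finset.sum_eq_single k]
            · congr 1
              simp only [hL, hj]
              rw [if_neg (by omega), if_neg (by omega), if_pos (by omega)]
            · intro i _ hi
              rcases lt_or_gt_of_ne (Fin.val_ne_of_ne hi) with h1 | h1
              · have : v i = 0 := IH i (by omega) i rfl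
                rw [this, zero_mul]
              · have : L i j - μ = 0 := by
                  simp only [hL, hj]
                  rw [if_neg (by omega), if_neg (by omega), if_neg (by omega)]
                  ring
                rw [this, mul_zero]
            · exact fun h => absurd (Finset.mem_univ k) h
          have : v k * (σ β - μ) = 0 := by rw [← hsingle]; exact hcomb
          rcases mul_eq_zero.mp this with h | h
          · exact h
          · exact absurd h (by intro h; linarith)
    funext k
    exact key k k rfl
  -- det convergence
  have hdet : Tendsto (fun α => (E α).det) atTop (nhds L.det) :=
    ((continuous_id.matrix_det).tendsto L).comp hten
  have hev : ∀ᶠ α in atTop, (E α).det ≠ 0 := hdet.eventually_ne hLdet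
  obtain ⟨α₀, hα₀⟩ := eventually_atTop.mp hev
  exact ⟨α₀, fun α hα => (Matrix.isUnit_iff_isUnit_det _).mpr
    (isUnit_iff_ne_zero.mpr (hα₀ α hα))⟩
end

section
/- Let σ: ℝ → ℝ satisfy |σ(t)| ≤ ρ₁e^{ρ₂t} for t < 0 and |σ(t)| ≤ ρ₃t + ρ₄ for t ≥ 0 (with ρ₁,ρ₂,ρ₃,ρ₄ > 0), and let β ∈ ℝ with σ(β) ≠ 0. Let c_1 < c_2 < ... < c_N. Define the N×N matrix E(α) with entries E(α)_{ij} = σ(α(c_j − c_i) + β) for j ∈ [N−1], and E(α)_{iN} = 1. Then det(E(α)) → ±σ(β)^{N−1} ≠ 0 as α → +∞; in particular E(α) is invertible for all sufficiently large α. -/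
open Filter Asymptotics Topology

/-!
Expand `det E(α)` by the Leibniz formula. The identity permutation contributes
`σ(β)^(N-1)` for every `α`: the diagonal entries are `σ(β)`, except the last one, which is `1`.
Any other permutation `p` moves some index upwards, `i < p i`; then `E(α)_{p i, i}` lies
outside the last column and equals `σ(α (c_i - c_{p i}) + β)`, which decays like
`exp(ρ₂ (c_i - c_{p i}) α)`, while all entries grow at most linearly in `α`.
So every other term of the expansion tends to `0`.
-/

theorem Equiv.Perm.exists_lt_apply_of_ne_one {α : Type*} [LinearOrder α] [Finite α]
    {π : Equiv.Perm α} (hπ : π ≠ 1) : ∃ i, i < π i := by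
  by_contra! h
  refine hπ (Equiv.ext fun i => ?_)
  induction i using WellFoundedLT.induction with
  | _ i ih =>
    refine (h i).eq_of_not_lt fun hlt => hlt.ne ?_
    exact π.injective (ih _ hlt)

theorem Fin.prod_ite_val_eq_sub_one {M : Type*} [CommMonoid M] (N : ℕ) (a : M) :
    ∏ i : Fin N, (if (i : ℕ) = N - 1 then 1 else a) = a ^ (N - 1) := by
  cases N with
  | zero => simp
  | succ k => simp [Fin.prod_univ_castSucc, Fin.val_castSucc, Nat.ne_of_lt]

theorem Matrix.tendsto_det_of_tendsto_prod {ι R α : Type*} [Fintype ι] [DecidableEq ι]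
    [CommRing R] [TopologicalSpace R] [IsTopologicalRing R] {l : Filter α}
    {A : α → Matrix ι ι R} {d : R} (hdiag : Tendsto (fun x => ∏ i, A x i i) l (𝓝 d))
    (hoff : ∀ π : Equiv.Perm ι, π ≠ 1 → Tendsto (fun x => ∏ i, A x (π i) i) l (𝓝 0)) :
    Tendsto (fun x => (A x).det) l (𝓝 d) := by
  have hterm : ∀ π : Equiv.Perm ι, Tendsto (fun x => (Equiv.Perm.sign π : R) * ∏ i, A x (π i) i)
      l (𝓝 ((Equiv.Perm.sign π : R) * if π = 1 then d else 0)) := by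
    intro π
    by_cases hπ : π = 1
    · subst hπ
      simpa using hdiag
    · simpa [hπ] using (hoff π hπ).const_mul _
  simpa [Matrix.det_apply'] using tendsto_finsetSum Finset.univ fun π _ => hterm π

theorem tendsto_prod_zero_of_isBigO_exp {ι : Type*} [Fintype ι] [DecidableEq ι]
    {f : ι → ℝ → ℝ} {i₀ : ι} {b : ℝ} (hb : b < 0)
    (h₀ : f i₀ =O[atTop] fun α => Real.exp (b * α)) (h : ∀ i ≠ i₀, f i =O[atTop] id) :
    Tendsto (fun α => ∏ i, f i α) atTop (𝓝 0) := by
  set k := (Finset.univ.erase i₀).card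
  have hrest : (fun α => ∏ i ∈ Finset.univ.erase i₀, f i α) =O[atTop] fun α => α ^ k := by
    simpa using IsBigO.finsetProd fun i hi => h i (Finset.ne_of_mem_erase hi)
  have hlim : Tendsto (fun α => Real.exp (b * α) * α ^ k) atTop (𝓝 0) := by
    simpa [mul_comm] using tendsto_rpow_mul_exp_neg_mul_atTop_nhds_zero k (-b) (by linarith)
  refine ((h₀.mul hrest).trans_tendsto hlim).congr fun α => ?_
  exact Finset.mul_prod_erase _ (f · α) (Finset.mem_univ i₀)

theorem abs_le_of_abs_le_exp_of_abs_le_linear {σ : ℝ → ℝ} {ρ₁ ρ₂ ρ₃ ρ₄ : ℝ} (hρ₂ : 0 ≤ ρ₂)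
    (hneg : ∀ t : ℝ, t < 0 → |σ t| ≤ ρ₁ * Real.exp (ρ₂ * t))
    (hpos : ∀ t : ℝ, 0 ≤ t → |σ t| ≤ ρ₃ * t + ρ₄) (t : ℝ) :
    |σ t| ≤ |ρ₁| + |ρ₄| + |ρ₃| * |t| := by
  rcases lt_or_ge t 0 with ht | ht
  · have hexp : Real.exp (ρ₂ * t) ≤ 1 :=
      Real.exp_le_one_iff.mpr (mul_nonpos_of_nonneg_of_nonpos hρ₂ ht.le)
    calc |σ t| ≤ ρ₁ * Real.exp (ρ₂ * t) := hneg t ht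
      _ ≤ |ρ₁| * 1 := by gcongr; exact le_abs_self _
      _ ≤ _ := by rw [mul_one, add_assoc]; exact le_add_of_nonneg_right (by positivity)
  · calc |σ t| ≤ ρ₃ * t + ρ₄ := hpos t ht
      _ ≤ |ρ₃ * t| + |ρ₄| := add_le_add (le_abs_self _) (le_abs_self _)
      _ ≤ _ := by rw [abs_mul]; linarith [abs_nonneg ρ₁]

theorem isBigO_comp_affine_atTop {f : ℝ → ℝ} {A B : ℝ} (hB : 0 ≤ B)
    (hf : ∀ t, |f t| ≤ A + B * |t|) (x β : ℝ) : (fun α => f (α * x + β)) =O[atTop] id := by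
  refine IsBigO.of_bound (|A| + B * |x| + B * |β|) ?_
  filter_upwards [eventually_ge_atTop 1] with α hα
  have haff : |α * x + β| ≤ α * |x| + |β| := by
    simpa [abs_mul, abs_of_nonneg (zero_le_one.trans hα)] using abs_add_le (α * x) β
  rw [Real.norm_eq_abs, id, Real.norm_eq_abs, abs_of_nonneg (zero_le_one.trans hα)]
  nlinarith [hf (α * x + β), le_abs_self A, abs_nonneg A, mul_le_mul_of_nonneg_left haff hB,
    mul_nonneg hB (abs_nonneg β)]

theorem isBigO_comp_affine_exp {σ : ℝ → ℝ} {ρ₁ ρ₂ : ℝ}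
    (hneg : ∀ t : ℝ, t < 0 → |σ t| ≤ ρ₁ * Real.exp (ρ₂ * t)) {x : ℝ} (hx : x < 0) (β : ℝ) :
    (fun α => σ (α * x + β)) =O[atTop] fun α => Real.exp (ρ₂ * x * α) := by
  refine IsBigO.of_bound (ρ₁ * Real.exp (ρ₂ * β)) ?_
  have haff : Tendsto (fun α => α * x + β) atTop atBot :=
    tendsto_atBot_add_const_right _ β (tendsto_id.atTop_mul_const_of_neg hx)
  filter_upwards [haff.eventually_lt_atBot 0] with α hα
  rw [Real.norm_eq_abs, Real.norm_eq_abs, Real.abs_exp, mul_assoc, ← Real.exp_add]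
  convert hneg _ hα using 3
  ring

theorem stmt_8_general (N : ℕ) (σ : ℝ → ℝ)
    (ρ₁ ρ₂ ρ₃ ρ₄ : ℝ) (hρ₂ : 0 < ρ₂)
    (hneg : ∀ t : ℝ, t < 0 → |σ t| ≤ ρ₁ * Real.exp (ρ₂ * t))
    (hpos : ∀ t : ℝ, 0 ≤ t → |σ t| ≤ ρ₃ * t + ρ₄)
    (β : ℝ) (hβ : σ β ≠ 0)
    (c : Fin N → ℝ) (hc : StrictMono c)
    (E : ℝ → Matrix (Fin N) (Fin N) ℝ)
    (hE : ∀ (α : ℝ) (i j : Fin N), E α i j =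
      if j.val = N - 1 then 1 else σ (α * (c j - c i) + β)) :
    Tendsto (fun α : ℝ => (E α).det) atTop (nhds (σ β ^ (N - 1))) ∧
    σ β ^ (N - 1) ≠ 0 ∧
    ∃ α₀ : ℝ, ∀ α : ℝ, α₀ ≤ α → IsUnit (E α) := by
  have hgrowth := abs_le_of_abs_le_exp_of_abs_le_linear hρ₂.le hneg hpos
  have hentry : ∀ i j, (fun α => E α i j) =O[atTop] id := by
    intro i j
    simp_rw [hE]
    split_ifs
    · exact (isLittleO_const_id_atTop 1).isBigO
    · exact isBigO_comp_affine_atTop (abs_nonneg _) hgrowth _ _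
  have hdiag (α : ℝ) : ∏ i, E α i i = σ β ^ (N - 1) := by
    simp [hE, Fin.prod_ite_val_eq_sub_one]
  have hoff (p : Equiv.Perm (Fin N)) (hp : p ≠ 1) :
      Tendsto (fun α => ∏ i, E α (p i) i) atTop (𝓝 0) := by
    obtain ⟨i, hi⟩ := p.exists_lt_apply_of_ne_one hp
    have hlast : (i : ℕ) ≠ N - 1 := by have := (p i).isLt; omega
    have hgap : c i - c (p i) < 0 := sub_neg.mpr (hc hi)
    refine tendsto_prod_zero_of_isBigO_exp (i₀ := i) (mul_neg_of_pos_of_neg hρ₂ hgap) ?_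
      fun j _ => hentry _ _
    simpa [hE, hlast] using isBigO_comp_affine_exp hneg hgap β
  have hdet := Matrix.tendsto_det_of_tendsto_prod
    (tendsto_const_nhds.congr fun α => (hdiag α).symm) hoff
  refine ⟨hdet, pow_ne_zero _ hβ, ?_⟩
  obtain ⟨α₀, hα₀⟩ := eventually_atTop.mp (hdet.eventually_ne (pow_ne_zero _ hβ))
  exact ⟨α₀, fun α hα => (Matrix.isUnit_iff_isUnit_det _).mpr (hα₀ α hα).isUnit⟩

/-- Let `σ` satisfy `|σ(t)| ≤ ρ₁ e^{ρ₂ t}` for `t < 0` and `|σ(t)| ≤ ρ₃ t + ρ₄` for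
`t ≥ 0`, with `σ(β) ≠ 0`, and let `c_1 < ⋯ < c_N`. Define `E(α)` with entries
`σ(α (c_j - c_i) + β)` in the first `N-1` columns and all ones in the last column.
Then `det E(α) → σ(β)^{N-1} ≠ 0` as `α → ∞`; in particular `E(α)` is invertible
for all sufficiently large `α`. -/
theorem stmt_8 (N : ℕ) (hN : 2 ≤ N) (σ : ℝ → ℝ)
    (ρ₁ ρ₂ ρ₃ ρ₄ : ℝ) (hρ₁ : 0 < ρ₁) (hρ₂ : 0 < ρ₂) (hρ₃ : 0 < ρ₃) (hρ₄ : 0 < ρ₄)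
    (hneg : ∀ t : ℝ, t < 0 → |σ t| ≤ ρ₁ * Real.exp (ρ₂ * t))
    (hpos : ∀ t : ℝ, 0 ≤ t → |σ t| ≤ ρ₃ * t + ρ₄)
    (β : ℝ) (hβ : σ β ≠ 0)
    (c : Fin N → ℝ) (hc : StrictMono c)
    (E : ℝ → Matrix (Fin N) (Fin N) ℝ)
    (hE : ∀ (α : ℝ) (i j : Fin N), E α i j =
      if j.val = N - 1 then 1 else σ (α * (c j - c i) + β)) :
    Tendsto (fun α : ℝ => (E α).det) atTop (nhds (σ β ^ (N - 1))) ∧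
    σ β ^ (N - 1) ≠ 0 ∧
    ∃ α₀ : ℝ, ∀ α : ℝ, α₀ ≤ α → IsUnit (E α) :=
  stmt_8_general N σ ρ₁ ρ₂ ρ₃ ρ₄ hρ₂ hneg hpos β hβ c hc E hE
end

section
/- Let Δ_L ∈ ℝ^{N×m} be the matrix with entries (Δ_L)_{ij} = l_1'(f_j(x_i) − y_{ij})·s_{ij} if x_i ∈ C_j and l_2'(f_j(x_i) − y_{ij})·s_{ij} if x_i ∉ C_j, where all s_{ij} > 0, l_1' ≤ 0 everywhere with l_1'(a) = 0 iff a ≥ 0, and l_2' ≥ 0 everywhere with l_2'(a) = 0 iff a ≤ 0. Let M ∈ ℝ^{m×N} satisfy M_{ji} > 0 if x_i ∈ C_j and M_{ji} < 0 if x_i ∉ C_j. Then M Δ_L = 0 implies Δ_L = 0. -/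
/-!
The diagonal entry `(M Δ)_jj = ∑_i M_ji Δ_ij` is a sum of non-positive terms, since in every
column of `Δ` each entry has the sign opposite to the corresponding entry of `M`. If it
vanishes, every term vanishes, and since `M` has no zero entries, so does `Δ`.
-/

open Matrix

theorem ne_zero_of_ite_pos_neg {R : Type*} [Zero R] [Preorder R] {p : Prop} [Decidable p]
    {a : R} (ha : if p then 0 < a else a < 0) : a ≠ 0 := by
  split_ifs at ha
  · exact ha.ne'
  · exact ha.ne

section SignPattern

variable {R : Type*} [Ring R] [LinearOrder R] [IsStrictOrderedRing R]

theorem mul_nonpos_of_ite_signs {p : Prop} [Decidable p] {a b : R}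
    (ha : if p then 0 < a else a < 0) (hb : if p then b ≤ 0 else 0 ≤ b) : a * b ≤ 0 := by
  split_ifs at ha hb
  · exact mul_nonpos_of_nonneg_of_nonpos ha.le hb
  · exact mul_nonpos_of_nonpos_of_nonneg ha.le hb

theorem Matrix.eq_zero_of_diag_mul_eq_zero {ι κ : Type*} [Fintype κ]
    (M : Matrix ι κ R) (Δ : Matrix κ ι R) (hM : ∀ j i, M j i ≠ 0)
    (hsign : ∀ j i, M j i * Δ i j ≤ 0) (h : ∀ j, (M * Δ) j j = 0) : Δ = 0 := by
  ext i j
  have hterm : M j i * Δ i j = 0 :=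
    (Finset.sum_eq_zero_iff_of_nonpos fun k _ => hsign j k).mp (h j) i (Finset.mem_univ i)
  exact (mul_eq_zero.mp hterm).resolve_left (hM j i)

end SignPattern

theorem stmt_16_general (N m : ℕ) (cl : Fin N → Fin m)
    (d₁ d₂ : ℝ → ℝ)
    (hd₁ : ∀ a : ℝ, d₁ a ≤ 0)
    (hd₂ : ∀ a : ℝ, 0 ≤ d₂ a)
    (A : Matrix (Fin N) (Fin m) ℝ)
    (s : Matrix (Fin N) (Fin m) ℝ) (hs : ∀ i j, 0 < s i j)
    (Δ : Matrix (Fin N) (Fin m) ℝ)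
    (hΔ : ∀ i j, Δ i j = (if cl i = j then d₁ (A i j) else d₂ (A i j)) * s i j)
    (M : Matrix (Fin m) (Fin N) ℝ)
    (hM : ∀ (j : Fin m) (i : Fin N), if cl i = j then 0 < M j i else M j i < 0)
    (h : M * Δ = 0) :
    Δ = 0 := by
  have hΔsign : ∀ i j, if cl i = j then Δ i j ≤ 0 else 0 ≤ Δ i j := by
    intro i j
    rw [hΔ]
    split_ifs
    · exact mul_nonpos_of_nonpos_of_nonneg (hd₁ _) (hs i j).le
    · exact mul_nonneg (hd₂ _) (hs i j).le
  exact Matrix.eq_zero_of_diag_mul_eq_zero M Δ (fun j i => ne_zero_of_ite_pos_neg (hM j i))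
    (fun j i => mul_nonpos_of_ite_signs (hM j i) (hΔsign i j)) (fun j => by rw [h]; rfl)

/-- Let `Δ_L` have entries `d₁(A_{ij})·s_{ij}` when sample `i` belongs to class `j`
and `d₂(A_{ij})·s_{ij}` otherwise, with `s_{ij} > 0`, `d₁ ≤ 0` vanishing exactly on
`[0,∞)`, `d₂ ≥ 0` vanishing exactly on `(-∞,0]`. If `M` satisfies `M_{ji} > 0` when
`i ∈ C_j` and `M_{ji} < 0` otherwise, then `M Δ_L = 0` implies `Δ_L = 0`. -/
theorem stmt_16 (N m : ℕ) (cl : Fin N → Fin m)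
    (d₁ d₂ : ℝ → ℝ)
    (hd₁ : ∀ a : ℝ, d₁ a ≤ 0) (hd₁z : ∀ a : ℝ, d₁ a = 0 ↔ 0 ≤ a)
    (hd₂ : ∀ a : ℝ, 0 ≤ d₂ a) (hd₂z : ∀ a : ℝ, d₂ a = 0 ↔ a ≤ 0)
    (A : Matrix (Fin N) (Fin m) ℝ)
    (s : Matrix (Fin N) (Fin m) ℝ) (hs : ∀ i j, 0 < s i j)
    (Δ : Matrix (Fin N) (Fin m) ℝ)
    (hΔ : ∀ i j, Δ i j = (if cl i = j then d₁ (A i j) else d₂ (A i j)) * s i j)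
    (M : Matrix (Fin m) (Fin N) ℝ)
    (hM : ∀ (j : Fin m) (i : Fin N), if cl i = j then 0 < M j i else M j i < 0)
    (h : M * Δ = 0) :
    Δ = 0 :=
  stmt_16_general N m cl d₁ d₂ hd₁ hd₂ A s hs Δ hΔ M hM h
end
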